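/- Define s(n) = a(n) − b(n), where a(n) and b(n) count even and odd Motzkin paths of length n. Then s(0) = 1 and s(n+1) = s(n) − Σ_{k=0}^{n-1} s(k)·s(n-1-k) for n ≥ 0. -/

import Mathlib

inductive MStep where
  | U : MStep
  | D : MStep
  | H : MStep
deriving DecidableEq

/-- A word in {U,D,H} is a Motzkin path if #U = #D and no prefix has more D's than U's. -/
def IsMotzkin (w : List MStep) : Prop :=
  w.count MStep.U = w.count MStep.D ∧
  ∀ p : List MStep, p <+: w → p.count MStep.D ≤ p.count MStep.U

/-- Number of Motzkin paths of length n (the n-th Motzkin number). -/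
noncomputable def motzkinNum (n : ℕ) : ℕ :=
  Nat.card {w : List MStep // w.length = n ∧ IsMotzkin w}

/-- Number of Motzkin paths of length n with an even number of U steps. -/
noncomputable def evenMotzkin (n : ℕ) : ℕ :=
  Nat.card {w : List MStep // w.length = n ∧ IsMotzkin w ∧ Even (w.count MStep.U)}

/-- Number of Motzkin paths of length n with an odd number of U steps. -/
noncomputable def oddMotzkin (n : ℕ) : ℕ :=
  Nat.card {w : List MStep // w.length = n ∧ IsMotzkin w ∧ Odd (w.count MStep.U)}

/-- The shadow of the n-th Motzkin number: s(n) = a(n) - b(n). -/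
noncomputable def shadow (n : ℕ) : ℤ :=
  (evenMotzkin n : ℤ) - (oddMotzkin n : ℤ)

/-!
Weight every Motzkin path by `(-1) ^ #U`, so that `shadow n` is the signed count of the paths of
length `n`. A nonempty path either starts with a flat step `H` followed by a path of length `n`,
or splits uniquely at its first return to the axis as `U p D q` with Motzkin paths `p`, `q` of
lengths `k` and `n - 1 - k`. The extra `U` flips the sign, whence the minus in the recurrence.
-/

namespace List

variable {α : Type*} {φ : List α → Prop}

theorem forall_prefix_cons_iff {a : α} {l : List α} :
    (∀ r, r <+: a :: l → φ r) ↔ φ [] ∧ ∀ r, r <+: l → φ (a :: r) := by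
  simp only [prefix_cons_iff]
  constructor
  · intro h
    exact ⟨h [] (Or.inl rfl), fun r hr => h _ (Or.inr ⟨r, rfl, hr⟩)⟩
  · rintro ⟨hnil, hcons⟩ r (rfl | ⟨t, rfl, ht⟩)
    exacts [hnil, hcons t ht]

theorem forall_prefix_append_iff {l₁ l₂ : List α} :
    (∀ r, r <+: l₁ ++ l₂ → φ r) ↔ (∀ r, r <+: l₁ → φ r) ∧ ∀ r, r <+: l₂ → φ (l₁ ++ r) := by
  constructor
  · intro h
    exact ⟨fun r hr => h r (hr.trans (prefix_append l₁ l₂)),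
      fun r hr => h _ ((prefix_append_right_inj l₁).mpr hr)⟩
  · rintro ⟨h₁, h₂⟩ r ⟨s, hs⟩
    rcases append_eq_append_iff.mp hs with ⟨a, rfl, _⟩ | ⟨c, rfl, hc⟩
    · exact h₁ r ⟨a, rfl⟩
    · exact h₂ c ⟨s, hc.symm⟩

end List

open MStep

theorem isMotzkin_nil : IsMotzkin [] :=
  ⟨rfl, fun p hp => by simp [List.prefix_nil.mp hp]⟩

theorem not_isMotzkin_D_cons (t : List MStep) : ¬ IsMotzkin (D :: t) :=
  fun h => by simpa using h.2 [D] (List.prefix_append [D] t)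

theorem isMotzkin_H_cons_iff {t : List MStep} : IsMotzkin (H :: t) ↔ IsMotzkin t := by
  simp [IsMotzkin, List.forall_prefix_cons_iff]

theorem isMotzkin_U_cons_append_D_cons_iff {p q : List MStep} (hp : IsMotzkin p) :
    IsMotzkin (U :: p ++ D :: q) ↔ IsMotzkin q := by
  obtain ⟨hpc, hpp⟩ := hp
  simp only [IsMotzkin, List.cons_append, List.forall_prefix_cons_iff,
    List.forall_prefix_append_iff]
  have hpp' : ∀ r, r <+: p → r.count D ≤ r.count U + 1 := fun r hr => (hpp r hr).trans (by omega)
  simp only [List.count_cons_self, List.count_append, hpc, List.count_cons_of_ne, ne_eq,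
    reduceCtorEq, not_false_eq_true, List.count_nil, List.append_nil, le_refl,
    le_add_iff_nonneg_right, zero_le, true_and]
  exact and_congr (by omega) ((and_iff_right hpp').trans (forall₂_congr fun r _ => by omega))

theorem exists_eq_append_D_cons_isMotzkin :
    ∀ {t : List MStep}, t.count U < t.count D → ∃ p q, t = p ++ D :: q ∧ IsMotzkin p
  | [], h => by simp at h
  | D :: t, _ => ⟨[], t, rfl, isMotzkin_nil⟩
  | H :: t, h => by
    obtain ⟨p, q, rfl, hp⟩ := exists_eq_append_D_cons_isMotzkin (t := t) (by simpa using h)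
    exact ⟨H :: p, q, rfl, isMotzkin_H_cons_iff.mpr hp⟩
  | U :: t, h => by
    obtain ⟨p, q, ht, hp⟩ := exists_eq_append_D_cons_isMotzkin (t := t) (by simp at h; omega)
    have hq : q.count U < q.count D := by simp [ht, hp.1] at h; omega
    obtain ⟨p', q', rfl, hp'⟩ := exists_eq_append_D_cons_isMotzkin hq
    exact ⟨U :: p ++ D :: p', q', by simp [ht], (isMotzkin_U_cons_append_D_cons_iff hp).mpr hp'⟩
termination_by t => t.length
decreasing_by
  · simp
  · simp
  · simp [ht]; omega

theorem isMotzkin_U_cons_iff {t : List MStep} :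
    IsMotzkin (U :: t) ↔ ∃ p q, t = p ++ D :: q ∧ IsMotzkin p ∧ IsMotzkin q := by
  constructor
  · intro h
    have hcount : t.count U < t.count D := by have := h.1; simp at this; omega
    obtain ⟨p, q, rfl, hp⟩ := exists_eq_append_D_cons_isMotzkin hcount
    exact ⟨p, q, rfl, hp, (isMotzkin_U_cons_append_D_cons_iff hp).mp h⟩
  · rintro ⟨p, q, rfl, hp, hq⟩
    exact (isMotzkin_U_cons_append_D_cons_iff hp).mpr hq

theorem IsMotzkin.not_append_D_prefix {p p' : List MStep} (hp : IsMotzkin p) (hp' : IsMotzkin p') :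
    ¬ p ++ [D] <+: p' := by
  intro h
  have := hp'.2 _ h
  simp [hp.1] at this

theorem IsMotzkin.append_D_cons_inj {p p' q q' : List MStep} (hp : IsMotzkin p)
    (hp' : IsMotzkin p') (h : p ++ D :: q = p' ++ D :: q') : p = p' ∧ q = q' := by
  have hpp' : p = p' := by
    have h₁ : p ++ [D] <+: p' ++ D :: q' := h ▸ ⟨q, by simp⟩
    have h₂ : p' ++ [D] <+: p' ++ D :: q' := ⟨q', by simp⟩
    rcases List.prefix_or_prefix_of_prefix h₁ h₂ with h₃ | h₃ <;>
      rcases List.prefix_concat_iff.mp h₃ with h₄ | h₄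
    · exact List.append_cancel_right h₄
    · exact absurd h₄ (hp.not_append_D_prefix hp')
    · exact (List.append_cancel_right h₄).symm
    · exact absurd h₄ (hp'.not_append_D_prefix hp)
  subst hpp'
  simpa using h

open scoped Finset

instance : Fintype MStep :=
  ⟨{U, D, H}, fun x => by cases x <;> simp⟩

theorem finite_setOf_isMotzkin_length_eq (n : ℕ) :
    {w : List MStep | w.length = n ∧ IsMotzkin w}.Finite :=
  (List.finite_length_eq MStep n).subset fun _ hw => hw.1

noncomputable def motzkinPaths (n : ℕ) : Finset (List MStep) :=
  (finite_setOf_isMotzkin_length_eq n).toFinset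

@[simp]
theorem mem_motzkinPaths {n : ℕ} {w : List MStep} :
    w ∈ motzkinPaths n ↔ w.length = n ∧ IsMotzkin w := by
  simp [motzkinPaths]

theorem motzkinPaths_zero : motzkinPaths 0 = {[]} := by
  ext w
  simp only [mem_motzkinPaths, List.length_eq_zero_iff, Finset.mem_singleton, and_iff_left_iff_imp]
  rintro rfl
  exact isMotzkin_nil

theorem motzkinPaths_succ (n : ℕ) :
    motzkinPaths (n + 1) = (motzkinPaths n).image (H :: ·) ∪
      (Finset.range n).biUnion fun k =>
        (motzkinPaths k ×ˢ motzkinPaths (n - 1 - k)).image fun pq => U :: pq.1 ++ D :: pq.2 := by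
  ext w
  simp only [Finset.mem_union, Finset.mem_image, Finset.mem_biUnion, Finset.mem_range,
    Finset.mem_product, mem_motzkinPaths, Prod.exists]
  constructor
  · rintro ⟨hlen, hw⟩
    match w, hlen, hw with
    | D :: t, _, hw => exact absurd hw (not_isMotzkin_D_cons t)
    | H :: t, hlen, hw => exact Or.inl ⟨t, ⟨by simpa using hlen, isMotzkin_H_cons_iff.mp hw⟩, rfl⟩
    | U :: t, hlen, hw =>
      obtain ⟨p, q, rfl, hp, hq⟩ := isMotzkin_U_cons_iff.mp hw
      simp only [List.length_cons, List.length_append] at hlen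
      exact Or.inr ⟨p.length, by omega, p, q, ⟨⟨rfl, hp⟩, by omega, hq⟩, rfl⟩
  · rintro (⟨t, ⟨rfl, ht⟩, rfl⟩ | ⟨k, hk, p, q, ⟨⟨rfl, hp⟩, hql, hq⟩, rfl⟩)
    · exact ⟨rfl, isMotzkin_H_cons_iff.mpr ht⟩
    · exact ⟨by simp; omega, isMotzkin_U_cons_iff.mpr ⟨p, q, rfl, hp, hq⟩⟩

theorem Finset.sum_neg_one_pow_eq_card_sub_card {ι : Type*} (s : Finset ι) (f : ι → ℕ) :
    ∑ i ∈ s, (-1 : ℤ) ^ f i = #{i ∈ s | Even (f i)} - #{i ∈ s | Odd (f i)} := by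
  simp only [neg_one_pow_eq_ite, Finset.sum_ite, Finset.sum_const, ← Nat.not_even_iff_odd]
  simp [sub_eq_add_neg]

theorem shadow_eq_sum (n : ℕ) : shadow n = ∑ w ∈ motzkinPaths n, (-1 : ℤ) ^ w.count U := by
  rw [shadow, evenMotzkin, oddMotzkin, Finset.sum_neg_one_pow_eq_card_sub_card,
    Nat.subtype_card _ fun w => ?_, Nat.subtype_card _ fun w => ?_]
  all_goals simp [and_assoc]

theorem injOn_U_cons_append_D_cons :
    Set.InjOn (fun pq : List MStep × List MStep => U :: pq.1 ++ D :: pq.2)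
      {pq | IsMotzkin pq.1} := by
  rintro ⟨p, q⟩ hp ⟨p', q'⟩ hp' h
  obtain ⟨rfl, rfl⟩ := IsMotzkin.append_D_cons_inj hp hp' (List.cons_injective h)
  rfl

theorem sum_motzkinPaths_succ {β : Type*} [AddCommMonoid β] (n : ℕ) (f : List MStep → β) :
    ∑ w ∈ motzkinPaths (n + 1), f w = ∑ w ∈ motzkinPaths n, f (H :: w) +
      ∑ k ∈ Finset.range n, ∑ p ∈ motzkinPaths k, ∑ q ∈ motzkinPaths (n - 1 - k),
        f (U :: p ++ D :: q) := by
  have hpieces : ∀ k, Set.InjOn (fun pq : List MStep × List MStep => U :: pq.1 ++ D :: pq.2)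
      ↑(motzkinPaths k ×ˢ motzkinPaths (n - 1 - k)) := fun k =>
    injOn_U_cons_append_D_cons.mono fun _ hpq =>
      (mem_motzkinPaths.mp (Finset.mem_product.mp hpq).1).2
  rw [motzkinPaths_succ, Finset.sum_union, Finset.sum_image, Finset.sum_biUnion]
  · congr 1
    refine Finset.sum_congr rfl fun k _ => ?_
    rw [Finset.sum_image (hpieces k), Finset.sum_product]
  · intro k _ k' _ hkk'
    refine Finset.disjoint_left.mpr fun w hw hw' => hkk' ?_
    simp only [Finset.mem_image, Finset.mem_product, mem_motzkinPaths] at hw hw'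
    obtain ⟨⟨p, q⟩, ⟨⟨rfl, hp⟩, -⟩, rfl⟩ := hw
    obtain ⟨⟨p', q'⟩, ⟨⟨rfl, hp'⟩, -⟩, h⟩ := hw'
    rw [(IsMotzkin.append_D_cons_inj hp' hp (List.cons_injective h)).1]
  · exact fun _ _ _ _ h => List.cons_injective h
  · simp only [Finset.disjoint_left, Finset.mem_image, Finset.mem_biUnion]
    rintro _ ⟨t, -, rfl⟩ ⟨k, -, pq, -, h⟩
    exact MStep.noConfusion (List.cons.inj h).1

theorem neg_one_pow_count_U_cons_append_D_cons (p q : List MStep) :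
    (-1 : ℤ) ^ (U :: p ++ D :: q).count U = -((-1) ^ p.count U * (-1) ^ q.count U) := by
  simp [pow_succ, pow_add]

theorem stmt_10 :
    shadow 0 = 1 ∧
    ∀ n : ℕ, shadow (n + 1) = shadow n - ∑ k ∈ Finset.range n, shadow k * shadow (n - 1 - k) := by
  refine ⟨by simp [shadow_eq_sum, motzkinPaths_zero], fun n => ?_⟩
  simp only [shadow_eq_sum, sum_motzkinPaths_succ, neg_one_pow_count_U_cons_append_D_cons,
    Finset.sum_neg_distrib, Finset.sum_mul_sum]
  simp [sub_eq_add_neg]
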